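/- Let μ_1 denote the distribution of (x_1 + x_2)/√2 where x_1, x_2 are classically independent standard semicircle variables. Then the free cumulants of μ_1 satisfy: all odd free cumulants vanish, κ_2(μ_1) = 1, and for every even integer n ≥ 4, κ_n(μ_1) = 2·(1/2)^{n/2}·|P_2^{bicon}(n)|, where P_2^{bicon}(n) is the set of connected pair partitions of [n] whose intersection graph is bipartite. -/

import Mathlib

open Finset

def Crosses {n : ℕ} (V W : Finset (Fin n)) : Prop :=
  ∃ i k j l : Fin n, i < k ∧ k < j ∧ j < l ∧ i ∈ V ∧ j ∈ V ∧ k ∈ W ∧ l ∈ W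

def CrossSym {n : ℕ} (V W : Finset (Fin n)) : Prop := Crosses V W ∨ Crosses W V

def IsPartitionOn {n : ℕ} (S : Finset (Fin n)) (π : Finset (Finset (Fin n))) : Prop :=
  (∀ V ∈ π, V.Nonempty ∧ V ⊆ S) ∧ ∀ i ∈ S, ∃! V, V ∈ π ∧ i ∈ V

def IsPairPartitionOn {n : ℕ} (S : Finset (Fin n)) (π : Finset (Finset (Fin n))) : Prop :=
  IsPartitionOn S π ∧ ∀ V ∈ π, V.card = 2

def IsPairPartition (n : ℕ) (π : Finset (Finset (Fin n))) : Prop :=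
  IsPairPartitionOn Finset.univ π

def NoncrossingPart {n : ℕ} (π : Finset (Finset (Fin n))) : Prop :=
  ∀ V ∈ π, ∀ W ∈ π, V ≠ W → ¬ CrossSym V W

def interGraph {n : ℕ} (π : Finset (Finset (Fin n))) :
    SimpleGraph {V : Finset (Fin n) // V ∈ π} where
  Adj V W := V ≠ W ∧ CrossSym V.1 W.1
  symm := by
    constructor
    rintro V W ⟨h1, h2⟩
    exact ⟨h1.symm, h2.symm⟩
  loopless := by constructor; rintro V ⟨h1, _⟩; exact h1 rfl

noncomputable def ccCount {n : ℕ} (π : Finset (Finset (Fin n))) : ℕ :=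
  Nat.card (interGraph π).ConnectedComponent

def IsBipartitePart {n : ℕ} (π : Finset (Finset (Fin n))) : Prop :=
  (interGraph π).Colorable 2

def IsConnectedPart {n : ℕ} (π : Finset (Finset (Fin n))) : Prop :=
  (interGraph π).Connected

open scoped Classical in
noncomputable def crBlocks {n : ℕ} (π : Finset (Finset (Fin n))) : Finset (Finset (Fin n)) :=
  π.filter (fun V => ∃ W ∈ π, W ≠ V ∧ CrossSym V W)

open scoped Classical in
noncomputable def ncrBlocks {n : ℕ} (π : Finset (Finset (Fin n))) : Finset (Finset (Fin n)) :=
  π.filter (fun V => ¬ ∃ W ∈ π, W ≠ V ∧ CrossSym V W)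

noncomputable def crCount {n : ℕ} (π : Finset (Finset (Fin n))) : ℕ := (crBlocks π).card
noncomputable def ncrCount {n : ℕ} (π : Finset (Finset (Fin n))) : ℕ := (ncrBlocks π).card

open scoped Classical in
noncomputable def compPart {n : ℕ} (π : Finset (Finset (Fin n))) : Finset (Finset (Fin n)) :=
  π.attach.image fun V => Finset.univ.filter fun i : Fin n =>
    ∃ W, ∃ hW : W ∈ π, i ∈ W ∧ (interGraph π).Reachable V ⟨W, hW⟩

def restrictPart {n : ℕ} (π : Finset (Finset (Fin n))) (T : Finset (Fin n)) :
    Finset (Finset (Fin n)) :=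
  π.filter (· ⊆ T)

open scoped Classical in
noncomputable def pairPartitions (n : ℕ) : Finset (Finset (Finset (Fin n))) :=
  Finset.univ.filter (IsPairPartition n)

open scoped Classical in
noncomputable def biPairPartitions (n : ℕ) : Finset (Finset (Finset (Fin n))) :=
  (pairPartitions n).filter IsBipartitePart

open scoped Classical in
noncomputable def biconPairPartitions (n : ℕ) : Finset (Finset (Finset (Fin n))) :=
  (biPairPartitions n).filter IsConnectedPart

open scoped Classical in
noncomputable def ncPairPartitions (n : ℕ) : Finset (Finset (Finset (Fin n))) :=
  (pairPartitions n).filter NoncrossingPart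

open scoped Classical in
noncomputable def ncPartitions (n : ℕ) : Finset (Finset (Finset (Fin n))) :=
  Finset.univ.filter (fun π => IsPartitionOn Finset.univ π ∧ NoncrossingPart π)

/-- The moments of `μ₁`, the law of `(x₁+x₂)/√2` for independent standard
semicircle variables: odd moments vanish, `(2p)`-th moment is
`2^{-p} Σ_{π ∈ P₂^{bi}(2p)} 2^{cc(π)}`. -/
noncomputable def mu1Moment (p : ℕ) : ℝ :=
  if Odd p then 0
  else (1 / 2 : ℝ) ^ (p / 2) * ∑ π ∈ biPairPartitions p, (2 : ℝ) ^ ccCount π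


/-!
Group the bipartite pair partitions `π` of `[p]` according to the partition of `[p]` into the
supports of the connected components of their crossing graph. This partition is noncrossing, and
`π` is recovered by choosing, independently on each of its blocks `V`, a connected bipartite pair
partition of `V`. Since `2 ^ cc(π)` contributes one factor `2` per block, the moment formula
becomes `m_p = Σ_{σ ∈ NC(p)} Π_{V ∈ σ} 2 (1/2)^{|V|/2} |P₂^{bicon}(|V|)|`. The moment-cumulant
relation determines the cumulants recursively (the one-block partition contributes `κ_p`, every
other one only lower cumulants), so `κ_n = 2 (1/2)^{n/2} |P₂^{bicon}(n)|`: this vanishes for odd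
`n` and equals `1` for `n = 2`.
-/

open scoped Classical

namespace IsPartitionOn

variable {n : ℕ} {S : Finset (Fin n)} {π : Finset (Finset (Fin n))}

theorem eq_of_mem (h : IsPartitionOn S π) {B B' : Finset (Fin n)} (hB : B ∈ π) (hB' : B' ∈ π)
    {i : Fin n} (hiB : i ∈ B) (hiB' : i ∈ B') : B = B' :=
  (h.2 i ((h.1 B hB).2 hiB)).unique ⟨hB, hiB⟩ ⟨hB', hiB'⟩

theorem eq_singleton (h : IsPartitionOn S π) (hS : S ∈ π) : π = {S} := by
  refine eq_singleton_iff_unique_mem.2 ⟨hS, fun B hB => ?_⟩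
  obtain ⟨i, hi⟩ := (h.1 B hB).1
  exact h.eq_of_mem hB hS hi ((h.1 B hB).2 hi)

theorem sum_card (h : IsPartitionOn S π) : ∑ B ∈ π, B.card = S.card := by
  have hS : π.biUnion (fun B => B) = S := by
    ext i
    simp only [mem_biUnion]
    exact ⟨fun ⟨B, hB, hi⟩ => (h.1 B hB).2 hi, fun hi => (h.2 i hi).exists⟩
  rw [← hS, card_biUnion fun B hB B' hB' hne =>
    disjoint_left.2 fun _ hi hi' => hne (h.eq_of_mem hB hB' hi hi')]

theorem restrict (h : IsPartitionOn univ π) {T : Finset (Fin n)}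
    (hT : ∀ B ∈ π, ∀ i ∈ B, i ∈ T → B ⊆ T) : IsPartitionOn T (restrictPart π T) := by
  refine ⟨fun B hB => ⟨(h.1 B (mem_filter.1 hB).1).1, (mem_filter.1 hB).2⟩, fun i hi => ?_⟩
  obtain ⟨B, ⟨hB, hiB⟩, -⟩ := h.2 i (mem_univ i)
  exact ⟨B, ⟨mem_filter.2 ⟨hB, hT B hB i hiB hi⟩, hiB⟩,
    fun B' ⟨hB', hiB'⟩ => h.eq_of_mem (mem_filter.1 hB').1 hB hiB' hiB⟩

end IsPartitionOn

theorem isPartitionOn_iff {n : ℕ} {S : Finset (Fin n)} {π : Finset (Finset (Fin n))} :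
    IsPartitionOn S π ↔ (∀ V ∈ π, V.Nonempty ∧ V ⊆ S) ∧ (∀ i ∈ S, ∃ V ∈ π, i ∈ V) ∧
      ∀ V ∈ π, ∀ W ∈ π, ∀ i ∈ V, i ∈ W → V = W := by
  refine ⟨fun h => ⟨h.1, fun i hi => (h.2 i hi).exists,
    fun V hV W hW i hiV hiW => h.eq_of_mem hV hW hiV hiW⟩, fun ⟨h₁, h₂, h₃⟩ => ⟨h₁, fun i hi => ?_⟩⟩
  obtain ⟨V, hV, hiV⟩ := h₂ i hi
  exact ⟨V, ⟨hV, hiV⟩, fun W ⟨hW, hiW⟩ => h₃ W hW V hV i hiW hiV⟩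

theorem isPartitionOn_singleton {n : ℕ} {S : Finset (Fin n)} (hS : S.Nonempty) :
    IsPartitionOn S {S} :=
  ⟨fun B hB => by rw [mem_singleton.1 hB]; exact ⟨hS, subset_rfl⟩,
    fun _ hi => ⟨S, ⟨mem_singleton_self S, hi⟩, fun _ hB => mem_singleton.1 hB.1⟩⟩

theorem IsPairPartitionOn.card_eq {n : ℕ} {S : Finset (Fin n)} {ρ : Finset (Finset (Fin n))}
    (h : IsPairPartitionOn S ρ) : S.card = 2 * ρ.card := by
  rw [← h.1.sum_card, sum_congr rfl h.2, sum_const, smul_eq_mul, mul_comm]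

section Crossing

variable {n : ℕ} {A A' B B' : Finset (Fin n)}

theorem Crosses.mono (h : Crosses A B) (hA : A ⊆ A') (hB : B ⊆ B') : Crosses A' B' :=
  let ⟨i, k, j, l, hik, hkj, hjl, hi, hj, hk, hl⟩ := h
  ⟨i, k, j, l, hik, hkj, hjl, hA hi, hA hj, hB hk, hB hl⟩

theorem CrossSym.mono (h : CrossSym A B) (hA : A ⊆ A') (hB : B ⊆ B') : CrossSym A' B' :=
  h.imp (·.mono hA hB) (·.mono hB hA)

theorem CrossSym.symm (h : CrossSym A B) : CrossSym B A := Or.symm h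

theorem CrossSym.exists_mem_between (h : CrossSym A B) :
    ∃ m ∈ B, ∃ a ∈ A, ∃ b ∈ A, a < m ∧ m < b := by
  rcases h with ⟨i, k, j, l, hik, hkj, -, hi, hj, hk, -⟩ | ⟨i, k, j, l, -, hkj, hjl, -, hj, hk, hl⟩
  exacts [⟨k, hk, i, hi, j, hj, hik, hkj⟩, ⟨j, hj, k, hk, l, hl, hkj, hjl⟩]

theorem crossSym_of_mem_between {a b u v : Fin n} (ha : a ∈ A) (hb : b ∈ A) (hu : u ∈ B)
    (hv : v ∈ B) (hau : a < u) (hub : u < b) (hv_out : v < a ∨ b < v) : CrossSym A B := by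
  rcases hv_out with hva | hbv
  exacts [Or.inr ⟨v, a, u, b, hva, hau, hub, hv, hu, ha, hb⟩,
    Or.inl ⟨a, u, b, v, hau, hub, hbv, ha, hb, hu, hv⟩]

theorem noncrossingPart_singleton (S : Finset (Fin n)) : NoncrossingPart {S} := by
  intro V hV W hW hne
  rw [mem_singleton] at hV hW
  exact absurd (hV.trans hW.symm) hne

end Crossing

section InterGraph

variable {n : ℕ} {π ρ : Finset (Finset (Fin n))}

theorem interGraph_adj_iff {v w : {V // V ∈ π}} :
    (interGraph π).Adj v w ↔ v.1 ≠ w.1 ∧ CrossSym v.1 w.1 :=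
  and_congr_left' Subtype.ext_iff.not

def interGraphEmbOfSubset (h : ρ ⊆ π) : interGraph ρ ↪g interGraph π where
  toFun v := ⟨v.1, h v.2⟩
  inj' _ _ hvw := Subtype.ext (Subtype.mk.inj hvw)
  map_rel_iff' := by intro v w; rw [interGraph_adj_iff, interGraph_adj_iff]; rfl

theorem IsBipartitePart.of_subset (hπ : IsBipartitePart π) (h : ρ ⊆ π) : IsBipartitePart ρ :=
  hπ.of_hom (interGraphEmbOfSubset h).toHom

theorem exists_reachable_of_crossClosed
    (hcl : ∀ B ∈ ρ, ∀ C ∈ π, B ≠ C → CrossSym B C → C ∈ ρ)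
    {u v : {V // V ∈ π}} (h : (interGraph π).Reachable u v) (hu : u.1 ∈ ρ) :
    ∃ hv : v.1 ∈ ρ, (interGraph ρ).Reachable ⟨u.1, hu⟩ ⟨v.1, hv⟩ := by
  obtain ⟨w⟩ := h
  induction w with
  | nil => exact ⟨hu, .rfl⟩
  | cons hadj _ ih =>
    obtain ⟨hne, hcr⟩ := interGraph_adj_iff.1 hadj
    obtain ⟨hv, hr⟩ := ih (hcl _ hu _ (Subtype.prop _) hne hcr)
    exact ⟨hv, (SimpleGraph.Adj.reachable ((interGraph_adj_iff (π := ρ)).2 ⟨hne, hcr⟩)).trans hr⟩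

theorem isBipartitePart_singleton (S : Finset (Fin n)) : IsBipartitePart {S} :=
  (SimpleGraph.colorable_of_fintype _).mono (by simp)

theorem isConnectedPart_singleton (S : Finset (Fin n)) : IsConnectedPart {S} := by
  have : Unique {V // V ∈ ({S} : Finset (Finset (Fin n)))} :=
    ⟨⟨⟨S, mem_singleton_self S⟩⟩, fun v => Subtype.ext (mem_singleton.1 v.2)⟩
  exact (SimpleGraph.connected_iff _).2 ⟨.of_subsingleton, inferInstance⟩

end InterGraph

theorem lt_or_lt_of_notMem_Ioo {α : Type*} [LinearOrder α] {a b z : α} (h : z ∉ Set.Ioo a b)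
    (ha : z ≠ a) (hb : z ≠ b) : z < a ∨ b < z := by
  rw [Set.mem_Ioo, not_and_or, not_lt, not_lt] at h
  exact h.imp (lt_of_le_of_ne · ha) (lt_of_le_of_ne' · hb)

section Components

variable {n : ℕ} {π : Finset (Finset (Fin n))}

noncomputable def compSupport (π : Finset (Finset (Fin n))) (v : {V // V ∈ π}) : Finset (Fin n) :=
  univ.filter fun i => ∃ W, ∃ hW : W ∈ π, i ∈ W ∧ (interGraph π).Reachable v ⟨W, hW⟩

theorem compPart_eq_image : compPart π = π.attach.image (compSupport π) := rfl

theorem exists_of_mem_compSupport {v : {V // V ∈ π}} {i : Fin n} (hi : i ∈ compSupport π v) :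
    ∃ w : {V // V ∈ π}, i ∈ w.1 ∧ (interGraph π).Reachable v w :=
  let ⟨W, hW, hiW, hr⟩ := (mem_filter.1 hi).2
  ⟨⟨W, hW⟩, hiW, hr⟩

theorem mem_compSupport_iff (hπ : IsPartitionOn univ π) {v w : {V // V ∈ π}} {i : Fin n}
    (hi : i ∈ w.1) : i ∈ compSupport π v ↔ (interGraph π).Reachable v w := by
  refine ⟨fun h => ?_, fun h => mem_filter.2 ⟨mem_univ i, w.1, w.2, hi, h⟩⟩
  obtain ⟨u, hiu, hr⟩ := exists_of_mem_compSupport h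
  rwa [Subtype.ext (hπ.eq_of_mem w.2 u.2 hi hiu)]

theorem subset_compSupport (v : {V // V ∈ π}) : v.1 ⊆ compSupport π v :=
  fun i hi => mem_filter.2 ⟨mem_univ i, v.1, v.2, hi, .rfl⟩

theorem subset_compSupport_iff (hπ : IsPartitionOn univ π) {v w : {V // V ∈ π}} :
    w.1 ⊆ compSupport π v ↔ (interGraph π).Reachable v w := by
  obtain ⟨i, hi⟩ := (hπ.1 w.1 w.2).1
  exact ⟨fun h => (mem_compSupport_iff hπ hi).1 (h hi),
    fun h _ hj => (mem_compSupport_iff hπ hj).2 h⟩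

theorem compSupport_eq_iff (hπ : IsPartitionOn univ π) {v w : {V // V ∈ π}} :
    compSupport π v = compSupport π w ↔ (interGraph π).Reachable v w := by
  refine ⟨fun h => (subset_compSupport_iff hπ).1 (h ▸ subset_compSupport w), fun h => ?_⟩
  ext i
  obtain ⟨B, ⟨hB, hiB⟩, -⟩ := hπ.2 i (mem_univ i)
  rw [mem_compSupport_iff hπ (w := ⟨B, hB⟩) hiB, mem_compSupport_iff hπ (w := ⟨B, hB⟩) hiB]
  exact ⟨h.symm.trans, h.trans⟩

theorem disjoint_compSupport (hπ : IsPartitionOn univ π) {v w : {V // V ∈ π}}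
    (hvw : ¬(interGraph π).Reachable v w) : Disjoint (compSupport π v) (compSupport π w) := by
  refine disjoint_left.2 fun i hv hw => ?_
  obtain ⟨u, hiu, hvu⟩ := exists_of_mem_compSupport hv
  exact hvw (hvu.trans ((mem_compSupport_iff hπ hiu).1 hw).symm)

theorem exists_reachable_mem_Ioo_notMem_Ioo {a b : Fin n} {v w : {V // V ∈ π}}
    (hvw : (interGraph π).Reachable v w) {x y : Fin n} (hx : x ∈ v.1) (hxab : x ∈ Set.Ioo a b)
    (hy : y ∈ w.1) (hyab : y ∉ Set.Ioo a b) :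
    ∃ u, (interGraph π).Reachable v u ∧ (∃ x ∈ u.1, x ∈ Set.Ioo a b) ∧
      ∃ y ∈ u.1, y ∉ Set.Ioo a b := by
  obtain ⟨p⟩ := hvw
  induction p generalizing x with
  | nil => exact ⟨_, .rfl, ⟨x, hx, hxab⟩, y, hy, hyab⟩
  | @cons v _ _ hadj _ ih =>
    by_cases hout : ∃ z ∈ v.1, z ∉ Set.Ioo a b
    · exact ⟨v, .rfl, ⟨x, hx, hxab⟩, hout⟩
    push Not at hout
    -- a block crossing `v` has a point between two points of `v`, hence inside `(a, b)`
    obtain ⟨m, hm, c, hc, d, hd, hcm, hmd⟩ := hadj.2.exists_mem_between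
    obtain ⟨u, hu, hin, hout'⟩ := ih hm ⟨(hout c hc).1.trans hcm, hmd.trans (hout d hd).2⟩ hy
    exact ⟨u, hadj.reachable.trans hu, hin, hout'⟩

/-- Say `i < k < j < l` with `i, j` in the support `V` of one component and `k, l` in the
support `W` of another. Walking from `k` to `l` inside the second component gives a block `E`
with a point `x ∈ (i, j)` and a point `y ∉ [i, j]`; the interval between `x` and `y` separates
`i` from `j`, so walking from `i` to `j` gives a block of the first component crossing `E`. -/
theorem not_crosses_compSupport (hπ : IsPartitionOn univ π) {v w : {V // V ∈ π}}
    (hvw : ¬(interGraph π).Reachable v w) : ¬Crosses (compSupport π v) (compSupport π w) := by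
  have hdisj := disjoint_compSupport hπ hvw
  have hsep : ∀ E : {V // V ∈ π}, (interGraph π).Reachable w E → ∀ a ∈ E.1, ∀ b ∈ E.1,
      ∀ D₁ D₂ : {V // V ∈ π}, (interGraph π).Reachable v D₁ → (interGraph π).Reachable v D₂ →
      ∀ s ∈ D₁.1, ∀ t ∈ D₂.1, s ∈ Set.Ioo a b → t ∉ Set.Ioo a b → False := by
    intro E hwE a ha b hb D₁ D₂ hv₁ hv₂ s hs t ht hsab htab
    obtain ⟨D, hD, ⟨u, huD, hu⟩, z, hzD, hz⟩ :=
      exists_reachable_mem_Ioo_notMem_Ioo (hv₁.symm.trans hv₂) hs hsab ht htab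
    have hzv : z ∈ compSupport π v := (subset_compSupport_iff hπ).2 (hv₁.trans hD) hzD
    have hzw : ∀ c ∈ E.1, z ≠ c := fun c hc hzc =>
      disjoint_left.1 hdisj hzv (hzc ▸ (subset_compSupport_iff hπ).2 hwE hc)
    have hcr : CrossSym D.1 E.1 := (crossSym_of_mem_between ha hb huD hzD hu.1 hu.2
      (lt_or_lt_of_notMem_Ioo hz (hzw a ha) (hzw b hb))).symm
    have hDE : D ≠ E := by
      rintro rfl
      exact hvw ((hv₁.trans hD).trans hwE.symm)
    exact hvw (((hv₁.trans hD).trans (SimpleGraph.Adj.reachable ⟨hDE, hcr⟩)).trans hwE.symm)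
  rintro ⟨i, k, j, l, hik, hkj, hjl, hi, hj, hk, hl⟩
  obtain ⟨Bi, hiBi, hvi⟩ := exists_of_mem_compSupport hi
  obtain ⟨Bj, hjBj, hvj⟩ := exists_of_mem_compSupport hj
  obtain ⟨Bk, hkBk, hwk⟩ := exists_of_mem_compSupport hk
  obtain ⟨Bl, hlBl, hwl⟩ := exists_of_mem_compSupport hl
  obtain ⟨E, hE, ⟨x, hxE, hx⟩, y, hyE, hy⟩ := exists_reachable_mem_Ioo_notMem_Ioo
    (hwk.symm.trans hwl) hkBk ⟨hik, hkj⟩ hlBl fun h => lt_asymm h.2 hjl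
  have hwE := hwk.trans hE
  have hyw : y ∈ compSupport π w := (subset_compSupport_iff hπ).2 hwE hyE
  rcases lt_or_lt_of_notMem_Ioo hy (fun h => disjoint_left.1 hdisj (h ▸ hi) hyw)
    (fun h => disjoint_left.1 hdisj (h ▸ hj) hyw) with hyi | hjy
  · exact hsep E hwE y hyE x hxE Bi Bj hvi hvj i hiBi j hjBj ⟨hyi, hx.1⟩
      fun h => lt_asymm h.2 hx.2
  · exact hsep E hwE x hxE y hyE Bj Bi hvj hvi j hjBj i hiBi ⟨hx.2, hjy⟩
      fun h => lt_asymm h.1 hx.1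

theorem compPart_isPartitionOn (hπ : IsPartitionOn univ π) : IsPartitionOn univ (compPart π) := by
  refine ⟨fun V hV => ?_, fun i _ => ?_⟩
  · obtain ⟨v, -, rfl⟩ := mem_image.1 hV
    exact ⟨(hπ.1 v.1 v.2).1.mono (subset_compSupport v), subset_univ _⟩
  · obtain ⟨B, ⟨hB, hiB⟩, -⟩ := hπ.2 i (mem_univ i)
    refine ⟨compSupport π ⟨B, hB⟩,
      ⟨mem_image_of_mem _ (mem_attach _ _), subset_compSupport _ hiB⟩, ?_⟩
    rintro V ⟨hV, hiV⟩
    obtain ⟨v, -, rfl⟩ := mem_image.1 hV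
    exact (compSupport_eq_iff hπ).2 ((mem_compSupport_iff hπ hiB).1 hiV)

theorem compPart_noncrossing (hπ : IsPartitionOn univ π) : NoncrossingPart (compPart π) := by
  rintro _ hV _ hW hne
  obtain ⟨v, -, rfl⟩ := mem_image.1 hV
  obtain ⟨w, -, rfl⟩ := mem_image.1 hW
  have hvw : ¬(interGraph π).Reachable v w := fun h => hne ((compSupport_eq_iff hπ).2 h)
  exact not_or.2 ⟨not_crosses_compSupport hπ hvw, not_crosses_compSupport hπ fun h => hvw h.symm⟩

theorem compPart_mem_ncPartitions (hπ : IsPartitionOn univ π) : compPart π ∈ ncPartitions n :=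
  mem_filter.2 ⟨mem_univ _, compPart_isPartitionOn hπ, compPart_noncrossing hπ⟩

theorem ccCount_eq_card_compPart (hπ : IsPartitionOn univ π) :
    ccCount π = (compPart π).card := by
  let f : (interGraph π).ConnectedComponent → compPart π :=
    SimpleGraph.ConnectedComponent.lift
      (fun v => ⟨compSupport π v, mem_image_of_mem _ (mem_attach _ v)⟩)
      fun v w p _ => Subtype.ext ((compSupport_eq_iff hπ).2 ⟨p⟩)
  have hf : Function.Bijective f := by
    refine ⟨fun c c' => ?_, fun ⟨V, hV⟩ => ?_⟩
    · induction c using SimpleGraph.ConnectedComponent.ind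
      induction c' using SimpleGraph.ConnectedComponent.ind
      exact fun h => SimpleGraph.ConnectedComponent.sound
        ((compSupport_eq_iff hπ).1 (congrArg Subtype.val h))
    · obtain ⟨v, -, rfl⟩ := mem_image.1 hV
      exact ⟨(interGraph π).connectedComponentMk v, rfl⟩
  rw [ccCount, Nat.card_eq_of_bijective f hf, Nat.card_eq_finsetCard]

end Components

noncomputable def biconPairPartitionsOn {p : ℕ} (V : Finset (Fin p)) :
    Finset (Finset (Finset (Fin p))) :=
  univ.filter fun ρ => IsPairPartitionOn V ρ ∧ IsBipartitePart ρ ∧ IsConnectedPart ρ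

section Gluing

variable {p : ℕ}

theorem mem_biconPairPartitionsOn {V : Finset (Fin p)} {ρ : Finset (Finset (Fin p))} :
    ρ ∈ biconPairPartitionsOn V ↔
      IsPairPartitionOn V ρ ∧ IsBipartitePart ρ ∧ IsConnectedPart ρ := by
  simp [biconPairPartitionsOn]

theorem mem_biPairPartitions {π : Finset (Finset (Fin p))} :
    π ∈ biPairPartitions p ↔ IsPairPartition p π ∧ IsBipartitePart π := by
  simp [biPairPartitions, pairPartitions]

theorem mem_biconPairPartitions {τ : Finset (Finset (Fin p))} :
    τ ∈ biconPairPartitions p ↔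
      IsPairPartition p τ ∧ IsBipartitePart τ ∧ IsConnectedPart τ := by
  simp [biconPairPartitions, biPairPartitions, pairPartitions, and_assoc]

theorem restrictPart_compSupport_mem {π : Finset (Finset (Fin p))} (hπ : IsPairPartition p π)
    (hbi : IsBipartitePart π) (v : {V // V ∈ π}) :
    restrictPart π (compSupport π v) ∈ biconPairPartitionsOn (compSupport π v) := by
  set ρ := restrictPart π (compSupport π v)
  have hmem : ∀ B (hB : B ∈ π), B ∈ ρ ↔ (interGraph π).Reachable v ⟨B, hB⟩ := fun B hB => by
    rw [← subset_compSupport_iff hπ.1]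
    exact mem_filter.trans (and_iff_right hB)
  have hcl : ∀ B ∈ ρ, ∀ C ∈ π, B ≠ C → CrossSym B C → C ∈ ρ := fun B hB C hC hne hcr => by
    have hvB := (hmem B (mem_filter.1 hB).1).1 hB
    exact (hmem C hC).2 (hvB.trans (SimpleGraph.Adj.reachable ⟨Subtype.coe_ne_coe.1 hne, hcr⟩))
  refine mem_biconPairPartitionsOn.2 ⟨⟨hπ.1.restrict fun B hB i hiB hi => ?_,
    fun B hB => hπ.2 B (mem_filter.1 hB).1⟩, hbi.of_subset (filter_subset _ _), ?_⟩
  · exact (subset_compSupport_iff hπ.1).2 ((mem_compSupport_iff hπ.1 (w := ⟨B, hB⟩) hiB).1 hi)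
  · refine (SimpleGraph.connected_iff _).2 ⟨?_, ⟨v.1, (hmem v.1 v.2).2 .rfl⟩⟩
    rintro ⟨B, hB⟩ ⟨C, hC⟩
    have hBπ := (mem_filter.1 hB).1
    have hCπ := (mem_filter.1 hC).1
    exact (exists_reachable_of_crossClosed hcl
      (((hmem B hBπ).1 hB).symm.trans ((hmem C hCπ).1 hC)) hB).2

noncomputable def glueOnBlocks (σ : Finset (Finset (Fin p)))
    (g : ∀ V ∈ σ, Finset (Finset (Fin p))) : Finset (Finset (Fin p)) :=
  σ.attach.biUnion fun V => g V.1 V.2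

variable {σ : Finset (Finset (Fin p))} {g : ∀ V ∈ σ, Finset (Finset (Fin p))}

theorem mem_glueOnBlocks {B : Finset (Fin p)} :
    B ∈ glueOnBlocks σ g ↔ ∃ V, ∃ hV : V ∈ σ, B ∈ g V hV := by
  simp [glueOnBlocks]

theorem subset_glueOnBlocks {V : Finset (Fin p)} (hV : V ∈ σ) : g V hV ⊆ glueOnBlocks σ g :=
  fun _ hB => mem_glueOnBlocks.2 ⟨V, hV, hB⟩

theorem glueOnBlocks_index_eq_of_crossSym (hσ : σ ∈ ncPartitions p)
    (hg : ∀ V (hV : V ∈ σ), g V hV ∈ biconPairPartitionsOn V) {V V' B B' : Finset (Fin p)}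
    {hV : V ∈ σ} {hV' : V' ∈ σ} (hB : B ∈ g V hV) (hB' : B' ∈ g V' hV')
    (hcr : CrossSym B B') : V = V' := by
  by_contra hne
  exact (mem_filter.1 hσ).2.2 V hV V' hV' hne <| hcr.mono
    ((mem_biconPairPartitionsOn.1 (hg V hV)).1.1.1 B hB).2
    ((mem_biconPairPartitionsOn.1 (hg V' hV')).1.1.1 B' hB').2

theorem glueOnBlocks_crossClosed (hσ : σ ∈ ncPartitions p)
    (hg : ∀ V (hV : V ∈ σ), g V hV ∈ biconPairPartitionsOn V) {V : Finset (Fin p)}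
    (hV : V ∈ σ) : ∀ B ∈ g V hV, ∀ C ∈ glueOnBlocks σ g, B ≠ C → CrossSym B C → C ∈ g V hV := by
  intro B hB C hC _ hcr
  obtain ⟨V', hV', hC'⟩ := mem_glueOnBlocks.1 hC
  obtain rfl := glueOnBlocks_index_eq_of_crossSym hσ hg hB hC' hcr
  exact hC'

theorem glueOnBlocks_isPairPartition (hσ : IsPartitionOn univ σ)
    (hg : ∀ V (hV : V ∈ σ), g V hV ∈ biconPairPartitionsOn V) :
    IsPairPartition p (glueOnBlocks σ g) := by
  have piece := fun V hV => (mem_biconPairPartitionsOn.1 (hg V hV)).1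
  refine ⟨⟨fun B hB => ?_, fun i _ => ?_⟩, fun B hB => ?_⟩
  · obtain ⟨V, hV, hB⟩ := mem_glueOnBlocks.1 hB
    exact ⟨((piece V hV).1.1 B hB).1, subset_univ _⟩
  · obtain ⟨V, ⟨hV, hiV⟩, -⟩ := hσ.2 i (mem_univ i)
    obtain ⟨B, ⟨hB, hiB⟩, -⟩ := (piece V hV).1.2 i hiV
    refine ⟨B, ⟨subset_glueOnBlocks hV hB, hiB⟩, fun B' ⟨hB', hiB'⟩ => ?_⟩
    obtain ⟨V', hV', hB'⟩ := mem_glueOnBlocks.1 hB'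
    obtain rfl := hσ.eq_of_mem hV' hV (((piece V' hV').1.1 B' hB').2 hiB') hiV
    exact (piece V' hV').1.eq_of_mem hB' hB hiB' hiB
  · obtain ⟨V, hV, hB⟩ := mem_glueOnBlocks.1 hB
    exact (piece V hV).2 B hB

theorem glueOnBlocks_isBipartitePart (hσ : σ ∈ ncPartitions p)
    (hg : ∀ V (hV : V ∈ σ), g V hV ∈ biconPairPartitionsOn V) :
    IsBipartitePart (glueOnBlocks σ g) := by
  refine SimpleGraph.colorable_iff_forall_connectedComponent.2 fun c => ?_
  obtain ⟨v, rfl⟩ := c.exists_rep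
  obtain ⟨V, hV, hvV⟩ := mem_glueOnBlocks.1 v.2
  have hmem : ∀ w : ((interGraph (glueOnBlocks σ g)).connectedComponentMk v).supp, w.1.1 ∈ g V hV :=
    fun w => (exists_reachable_of_crossClosed (glueOnBlocks_crossClosed hσ hg hV)
      (SimpleGraph.ConnectedComponent.exact w.2).symm hvV).1
  exact (mem_biconPairPartitionsOn.1 (hg V hV)).2.1.of_hom
    { toFun := fun w => ⟨w.1.1, hmem w⟩
      map_rel' := fun {a b} (h : (interGraph (glueOnBlocks σ g)).Adj a.1 b.1) =>
        (interGraph_adj_iff (π := g V hV)).2 ((interGraph_adj_iff (π := glueOnBlocks σ g)).1 h) }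

theorem compSupport_glueOnBlocks (hσ : σ ∈ ncPartitions p)
    (hg : ∀ V (hV : V ∈ σ), g V hV ∈ biconPairPartitionsOn V) {V B : Finset (Fin p)}
    (hV : V ∈ σ) (hB : B ∈ g V hV) :
    compSupport (glueOnBlocks σ g) ⟨B, subset_glueOnBlocks hV hB⟩ = V := by
  obtain ⟨⟨hpart, -⟩, -, hconn⟩ := mem_biconPairPartitionsOn.1 (hg V hV)
  ext i
  refine ⟨fun hi => ?_, fun hi => ?_⟩
  · obtain ⟨w, hiw, hr⟩ := exists_of_mem_compSupport hi
    obtain ⟨hw, -⟩ := exists_reachable_of_crossClosed (glueOnBlocks_crossClosed hσ hg hV) hr hB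
    exact ((hpart.1 w.1 hw).2 hiw)
  · obtain ⟨W, ⟨hW, hiW⟩, -⟩ := hpart.2 i hi
    exact mem_filter.2 ⟨mem_univ i, W, subset_glueOnBlocks hV hW, hiW,
      (hconn.preconnected ⟨B, hB⟩ ⟨W, hW⟩).map
        (interGraphEmbOfSubset (subset_glueOnBlocks hV)).toHom⟩

theorem compPart_glueOnBlocks (hσ : σ ∈ ncPartitions p)
    (hg : ∀ V (hV : V ∈ σ), g V hV ∈ biconPairPartitionsOn V) :
    compPart (glueOnBlocks σ g) = σ := by
  rw [compPart_eq_image]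
  ext V
  refine ⟨fun h => ?_, fun hV => ?_⟩
  · obtain ⟨⟨B, hB⟩, -, rfl⟩ := mem_image.1 h
    obtain ⟨V, hV, hBV⟩ := mem_glueOnBlocks.1 hB
    rwa [compSupport_glueOnBlocks hσ hg hV hBV]
  · obtain ⟨hpart, -⟩ := (mem_biconPairPartitionsOn.1 (hg V hV)).1
    obtain ⟨i, hi⟩ := ((mem_filter.1 hσ).2.1.1 V hV).1
    obtain ⟨B, ⟨hB, -⟩, -⟩ := hpart.2 i hi
    exact mem_image.2 ⟨_, mem_attach _ _, compSupport_glueOnBlocks hσ hg hV hB⟩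

theorem restrictPart_glueOnBlocks (hσ : IsPartitionOn univ σ)
    (hg : ∀ V (hV : V ∈ σ), g V hV ∈ biconPairPartitionsOn V) {V : Finset (Fin p)}
    (hV : V ∈ σ) : restrictPart (glueOnBlocks σ g) V = g V hV := by
  have piece := fun V hV => (mem_biconPairPartitionsOn.1 (hg V hV)).1.1
  ext B
  refine ⟨fun h => ?_, fun hB => mem_filter.2 ⟨subset_glueOnBlocks hV hB, ((piece V hV).1 B hB).2⟩⟩
  obtain ⟨hB, hBV⟩ := mem_filter.1 h
  obtain ⟨V', hV', hB⟩ := mem_glueOnBlocks.1 hB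
  obtain ⟨i, hi⟩ := ((piece V' hV').1 B hB).1
  obtain rfl := hσ.eq_of_mem hV' hV (((piece V' hV').1 B hB).2 hi) (hBV hi)
  exact hB

theorem glueOnBlocks_restrictPart {π : Finset (Finset (Fin p))} (hσ : compPart π = σ) :
    glueOnBlocks σ (fun V _ => restrictPart π V) = π := by
  ext B
  refine ⟨fun h => ?_, fun hB =>
    mem_glueOnBlocks.2 ⟨_, ?_, mem_filter.2 ⟨hB, subset_compSupport ⟨B, hB⟩⟩⟩⟩
  · obtain ⟨V, -, hB⟩ := mem_glueOnBlocks.1 h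
    exact (mem_filter.1 hB).1
  · exact hσ ▸ mem_image_of_mem _ (mem_attach _ ⟨B, hB⟩)

theorem card_filter_compPart_eq (hσ : σ ∈ ncPartitions p) :
    ((biPairPartitions p).filter fun π => compPart π = σ).card =
      ∏ V ∈ σ, (biconPairPartitionsOn V).card := by
  rw [← card_pi]
  refine card_bij' (fun π _ V _ => restrictPart π V) (fun g _ => glueOnBlocks σ g) ?_ ?_ ?_ ?_
  · intro π hπ
    obtain ⟨hπbi, rfl⟩ := mem_filter.1 hπ
    obtain ⟨hpair, hbi⟩ := mem_biPairPartitions.1 hπbi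
    refine mem_pi.2 fun V hV => ?_
    obtain ⟨v, -, rfl⟩ := mem_image.1 hV
    exact restrictPart_compSupport_mem hpair hbi v
  · intro g hg
    have hg := mem_pi.1 hg
    exact mem_filter.2 ⟨mem_biPairPartitions.2
      ⟨glueOnBlocks_isPairPartition (mem_filter.1 hσ).2.1 hg, glueOnBlocks_isBipartitePart hσ hg⟩,
      compPart_glueOnBlocks hσ hg⟩
  · intro π hπ
    exact glueOnBlocks_restrictPart (mem_filter.1 hπ).2
  · intro g hg
    funext V hV
    exact restrictPart_glueOnBlocks (mem_filter.1 hσ).2.1 (mem_pi.1 hg) hV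

end Gluing

section Relabel

variable {m p : ℕ}

theorem isPartitionOn_map_iff (f : Fin m ↪ Fin p) {S : Finset (Fin m)}
    {τ : Finset (Finset (Fin m))} :
    IsPartitionOn (S.map f) (τ.map (mapEmbedding f).toEmbedding) ↔ IsPartitionOn S τ := by
  simp only [isPartitionOn_iff, forall_mem_map, RelEmbedding.coe_toEmbedding, mapEmbedding_apply,
    map_nonempty, map_subset_map, mem_map', map_inj]
  simp only [mem_map, exists_exists_and_eq_and, RelEmbedding.coe_toEmbedding, mapEmbedding_apply,
    EmbeddingLike.apply_eq_iff_eq, exists_eq_right]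

theorem isPairPartitionOn_map_iff (f : Fin m ↪ Fin p) {S : Finset (Fin m)}
    {τ : Finset (Finset (Fin m))} :
    IsPairPartitionOn (S.map f) (τ.map (mapEmbedding f).toEmbedding) ↔ IsPairPartitionOn S τ := by
  simp only [IsPairPartitionOn, isPartitionOn_map_iff, forall_mem_map,
    RelEmbedding.coe_toEmbedding, mapEmbedding_apply, card_map]

theorem crosses_map_iff (e : Fin m ↪o Fin p) {A B : Finset (Fin m)} :
    Crosses (A.map e.toEmbedding) (B.map e.toEmbedding) ↔ Crosses A B := by
  constructor
  · rintro ⟨_, _, _, _, h₁, h₂, h₃, hi', hj', hk', hl'⟩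
    obtain ⟨i, hi, rfl⟩ := mem_map.1 hi'
    obtain ⟨j, hj, rfl⟩ := mem_map.1 hj'
    obtain ⟨k, hk, rfl⟩ := mem_map.1 hk'
    obtain ⟨l, hl, rfl⟩ := mem_map.1 hl'
    exact ⟨i, k, j, l, e.lt_iff_lt.1 h₁, e.lt_iff_lt.1 h₂, e.lt_iff_lt.1 h₃, hi, hj, hk, hl⟩
  · rintro ⟨i, k, j, l, h₁, h₂, h₃, hi, hj, hk, hl⟩
    exact ⟨e i, e k, e j, e l, e.lt_iff_lt.2 h₁, e.lt_iff_lt.2 h₂, e.lt_iff_lt.2 h₃,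
      mem_map_of_mem _ hi, mem_map_of_mem _ hj, mem_map_of_mem _ hk, mem_map_of_mem _ hl⟩

theorem crossSym_map_iff (e : Fin m ↪o Fin p) {A B : Finset (Fin m)} :
    CrossSym (A.map e.toEmbedding) (B.map e.toEmbedding) ↔ CrossSym A B :=
  or_congr (crosses_map_iff e) (crosses_map_iff e)

noncomputable def interGraphMapIso (e : Fin m ↪o Fin p) (τ : Finset (Finset (Fin m))) :
    interGraph τ ≃g interGraph (τ.map (mapEmbedding e.toEmbedding).toEmbedding) where
  toEquiv := Equiv.ofBijective (fun B => ⟨B.1.map e.toEmbedding, mem_map_of_mem _ B.2⟩)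
    ⟨fun _ _ h => Subtype.ext (map_injective _ (Subtype.mk.inj h)), fun ⟨_, hB⟩ =>
      let ⟨B, hB, hBe⟩ := mem_map.1 hB
      ⟨⟨B, hB⟩, Subtype.ext hBe⟩⟩
  map_rel_iff' := by
    intro A B
    rw [interGraph_adj_iff, interGraph_adj_iff]
    exact and_congr (map_injective _).ne_iff (crossSym_map_iff e)

theorem isBipartitePart_map_iff (e : Fin m ↪o Fin p) {τ : Finset (Finset (Fin m))} :
    IsBipartitePart (τ.map (mapEmbedding e.toEmbedding).toEmbedding) ↔ IsBipartitePart τ :=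
  ⟨(·.of_hom (interGraphMapIso e τ).toHom), (·.of_hom (interGraphMapIso e τ).symm.toHom)⟩

theorem isConnectedPart_map_iff (e : Fin m ↪o Fin p) {τ : Finset (Finset (Fin m))} :
    IsConnectedPart (τ.map (mapEmbedding e.toEmbedding).toEmbedding) ↔ IsConnectedPart τ :=
  (interGraphMapIso e τ).connected_iff.symm

theorem card_biconPairPartitionsOn (V : Finset (Fin p)) :
    (biconPairPartitionsOn V).card = (biconPairPartitions V.card).card := by
  set e := V.orderEmbOfFin rfl
  set F := (mapEmbedding e.toEmbedding).toEmbedding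
  have hmem : ∀ τ, τ.map F ∈ biconPairPartitionsOn (univ.map e.toEmbedding) ↔
      τ ∈ biconPairPartitions V.card := fun τ => by
    rw [mem_biconPairPartitionsOn, isPairPartitionOn_map_iff, isBipartitePart_map_iff,
      isConnectedPart_map_iff, mem_biconPairPartitions, IsPairPartition]
  have : biconPairPartitionsOn (univ.map e.toEmbedding) =
      (biconPairPartitions V.card).map (mapEmbedding F).toEmbedding := by
    ext ρ
    refine ⟨fun hρ => ?_, fun hρ => ?_⟩
    · obtain ⟨τ, -, rfl⟩ : ∃ τ ⊆ univ, ρ = τ.map F := by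
        refine subset_map_iff.1 fun B hB => ?_
        obtain ⟨u, -, rfl⟩ := subset_map_iff.1 ((mem_biconPairPartitionsOn.1 hρ).1.1.1 B hB).2
        exact mem_map_of_mem F (mem_univ u)
      exact mem_map_of_mem _ ((hmem τ).1 hρ)
    · obtain ⟨τ, hτ, rfl⟩ := mem_map.1 hρ
      exact (hmem τ).2 hτ
  rw [map_orderEmbOfFin_univ] at this
  rw [this, card_map]

end Relabel

section Moments

variable {p : ℕ}

theorem biPairPartitions_eq_empty_of_odd (hp : Odd p) : biPairPartitions p = ∅ := by
  refine eq_empty_of_forall_notMem fun π hπ => Nat.not_even_iff_odd.2 hp ⟨π.card, ?_⟩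
  have := (mem_biPairPartitions.1 hπ).1.card_eq
  rw [card_univ, Fintype.card_fin] at this
  omega

theorem biconPairPartitions_eq_empty_of_odd (hp : Odd p) : biconPairPartitions p = ∅ :=
  subset_empty.1 (biPairPartitions_eq_empty_of_odd hp ▸ filter_subset _ _)

theorem mu1Moment_eq (p : ℕ) :
    mu1Moment p = (1 / 2 : ℝ) ^ (p / 2) * ∑ π ∈ biPairPartitions p, (2 : ℝ) ^ ccCount π := by
  rw [mu1Moment]
  split_ifs with hp
  · rw [biPairPartitions_eq_empty_of_odd hp, sum_empty, mul_zero]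
  · rfl

noncomputable def mu1Cumulant (k : ℕ) : ℝ :=
  2 * (1 / 2 : ℝ) ^ (k / 2) * (biconPairPartitions k).card

theorem prod_mu1Cumulant_card {σ : Finset (Finset (Fin p))} (hσ : IsPartitionOn univ σ) :
    ∏ V ∈ σ, mu1Cumulant V.card =
      2 ^ σ.card * (1 / 2 : ℝ) ^ (p / 2) * ∏ V ∈ σ, ((biconPairPartitionsOn V).card : ℝ) := by
  simp_rw [mu1Cumulant, ← card_biconPairPartitionsOn]
  rw [prod_mul_distrib, prod_mul_distrib, prod_const, prod_pow_eq_pow_sum]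
  rcases eq_or_ne (∏ V ∈ σ, ((biconPairPartitionsOn V).card : ℝ)) 0 with h | h
  · rw [h, mul_zero, mul_zero]
  -- a nonempty `biconPairPartitionsOn V` forces `V.card` to be even
  have heven : ∀ V ∈ σ, 2 * (V.card / 2) = V.card := fun V hV => by
    obtain ⟨ρ, hρ⟩ :=
      card_pos.1 (Nat.pos_of_ne_zero (Nat.cast_ne_zero.1 (prod_ne_zero_iff.1 h V hV)))
    rw [(mem_biconPairPartitionsOn.1 hρ).1.card_eq, Nat.mul_div_cancel_left _ two_pos]
  have hsum : 2 * ∑ V ∈ σ, V.card / 2 = p := by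
    rw [mul_sum, sum_congr rfl heven, hσ.sum_card, card_univ, Fintype.card_fin]
  rw [show ∑ V ∈ σ, V.card / 2 = p / 2 by omega]

theorem mu1Moment_eq_sum_ncPartitions (p : ℕ) :
    mu1Moment p = ∑ σ ∈ ncPartitions p, ∏ V ∈ σ, mu1Cumulant V.card := by
  have hmaps : ∀ π ∈ biPairPartitions p, compPart π ∈ ncPartitions p :=
    fun π hπ => compPart_mem_ncPartitions (mem_biPairPartitions.1 hπ).1.1
  rw [mu1Moment_eq, ← sum_fiberwise_of_maps_to hmaps, mul_sum]
  refine sum_congr rfl fun σ hσ => ?_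
  have hcc : ∀ π ∈ (biPairPartitions p).filter (compPart · = σ),
      (2 : ℝ) ^ ccCount π = 2 ^ σ.card := fun π hπ => by
    obtain ⟨hπbi, rfl⟩ := mem_filter.1 hπ
    rw [ccCount_eq_card_compPart (mem_biPairPartitions.1 hπbi).1.1]
  rw [sum_congr rfl hcc, sum_const, card_filter_compPart_eq hσ, nsmul_eq_mul,
    prod_mu1Cumulant_card (mem_filter.1 hσ).2.1, Nat.cast_prod]
  ring

end Moments

section Cumulants

variable {p : ℕ}

theorem singleton_univ_mem_ncPartitions (hp : 0 < p) : {univ} ∈ ncPartitions p :=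
  mem_filter.2 ⟨mem_univ _, isPartitionOn_singleton ⟨⟨0, hp⟩, mem_univ _⟩,
    noncrossingPart_singleton _⟩

theorem card_lt_of_mem_ncPartitions {σ : Finset (Finset (Fin p))} (hσ : σ ∈ ncPartitions p)
    (hne : σ ≠ {univ}) {V : Finset (Fin p)} (hV : V ∈ σ) : 0 < V.card ∧ V.card < p := by
  have hσ := (mem_filter.1 hσ).2.1
  refine ⟨card_pos.2 (hσ.1 V hV).1, (card_le_univ V).trans_eq (Fintype.card_fin p) |>.lt_of_ne ?_⟩
  intro hVp
  have hVu : V = univ := eq_univ_of_card V (hVp.trans (Fintype.card_fin p).symm)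
  exact hne (hσ.eq_singleton (hVu ▸ hV))

theorem eq_of_sum_ncPartitions_prod_eq {R : Type*} [CommRing R] {κ κ' : ℕ → R}
    (h : ∀ p, 0 < p → ∑ σ ∈ ncPartitions p, ∏ V ∈ σ, κ V.card =
      ∑ σ ∈ ncPartitions p, ∏ V ∈ σ, κ' V.card) (p : ℕ) (hp : 0 < p) : κ p = κ' p := by
  induction p using Nat.strong_induction_on with
  | _ p ih =>
  have hsplit : ∀ κ : ℕ → R, ∑ σ ∈ ncPartitions p, ∏ V ∈ σ, κ V.card =
      κ p + ∑ σ ∈ (ncPartitions p).erase {univ}, ∏ V ∈ σ, κ V.card := fun κ => by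
    rw [← add_sum_erase _ _ (singleton_univ_mem_ncPartitions hp), prod_singleton, card_univ,
      Fintype.card_fin]
  have hrest : ∑ σ ∈ (ncPartitions p).erase {univ}, ∏ V ∈ σ, κ V.card =
      ∑ σ ∈ (ncPartitions p).erase {univ}, ∏ V ∈ σ, κ' V.card :=
    sum_congr rfl fun σ hσ => prod_congr rfl fun V hV =>
      let ⟨hpos, hlt⟩ := card_lt_of_mem_ncPartitions (mem_erase.1 hσ).2 (mem_erase.1 hσ).1 hV
      ih _ hlt hpos
  have := h p hp
  rwa [hsplit κ, hsplit κ', hrest, add_left_inj] at this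

end Cumulants

theorem biconPairPartitions_two : biconPairPartitions 2 = {{univ}} := by
  ext τ
  rw [mem_biconPairPartitions, mem_singleton]
  constructor
  · rintro ⟨hτ, -, -⟩
    obtain ⟨B, ⟨hB, -⟩, -⟩ := hτ.1.2 0 (mem_univ 0)
    have hBu : B = univ := eq_univ_of_card B (hτ.2 B hB)
    exact hτ.1.eq_singleton (hBu ▸ hB)
  · rintro rfl
    exact ⟨⟨isPartitionOn_singleton univ_nonempty, fun B hB => by rw [mem_singleton.1 hB]; rfl⟩,
      isBipartitePart_singleton _, isConnectedPart_singleton _⟩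

theorem free_cumulants_of_mu1 (κ : ℕ → ℝ)
    (hκ : ∀ p : ℕ, 0 < p →
      mu1Moment p = ∑ σ ∈ ncPartitions p, ∏ V ∈ σ, κ V.card) :
    (∀ n : ℕ, Odd n → κ n = 0) ∧ κ 2 = 1 ∧
      ∀ n : ℕ, Even n → 4 ≤ n →
        κ n = 2 * (1 / 2 : ℝ) ^ (n / 2) * (biconPairPartitions n).card := by
  have hκ_eq : ∀ p, 0 < p → κ p = mu1Cumulant p := eq_of_sum_ncPartitions_prod_eq
    fun p hp => (hκ p hp).symm.trans (mu1Moment_eq_sum_ncPartitions p)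
  refine ⟨fun n hn => ?_, ?_, fun n _ hn => hκ_eq n (by omega)⟩
  · rw [hκ_eq n hn.pos, mu1Cumulant, biconPairPartitions_eq_empty_of_odd hn, card_empty,
      Nat.cast_zero, mul_zero]
  · rw [hκ_eq 2 two_pos, mu1Cumulant, biconPairPartitions_two, card_singleton]
    norm_num
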